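/- arXiv:2605.24745 — 2 statements merged into one kernel-verified Lean document; each statement's English description precedes it below -/
import Mathlib

section
/- For every real α, ∫_{-∞}^{∞} sech³(τ) cos(ατ) dτ = π(α²+1) / (2 cosh(πα/2)). -/
/-!
Differentiating `sech τ ^ (n + 1) * (n sinh τ cos ατ - α cosh τ sin ατ)` gives
`n (n + 1) ∫ sech ^ (n + 2) cos ατ = (n ^ 2 + α ^ 2) ∫ sech ^ n cos ατ`, so the case `n = 1` reduces
everything to the Fourier transform of `sech`. That comes from Euler's reflection formula: the
substitution `x = sigmoid t` turns `Γ(s) Γ(1 - s) = B(s, 1 - s)` into `∫ e^(st) / (1 + e^t) dt`, and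
`t = 2τ` then gives `∫ e^(zτ) sech τ dτ = π / cos (πz / 2)` for `|Re z| < 1`; take `z = iα`.
-/

open Real MeasureTheory

noncomputable def sech (x : ℝ) : ℝ := (Real.cosh x)⁻¹

lemma sech_pos (x : ℝ) : 0 < sech x := inv_pos.2 (cosh_pos x)

lemma sech_le_one (x : ℝ) : sech x ≤ 1 := inv_le_one_of_one_le₀ (one_le_cosh x)

lemma sech_mul_cosh (x : ℝ) : sech x * cosh x = 1 := inv_mul_cancel₀ (cosh_pos x).ne'

@[fun_prop]
lemma continuous_sech : Continuous sech :=
  continuous_cosh.inv₀ fun x => (cosh_pos x).ne'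

lemma hasDerivAt_sech (x : ℝ) : HasDerivAt sech (-sinh x * sech x ^ 2) x := by
  have h : HasDerivAt (fun y => (cosh y)⁻¹) _ x := (hasDerivAt_cosh x).inv (cosh_pos x).ne'
  exact h.congr_deriv (by rw [sech, inv_pow, div_eq_mul_inv])

lemma sech_le_four_mul_inv_one_add_sq (x : ℝ) : sech x ≤ 4 * (1 + x ^ 2)⁻¹ := by
  have h : 1 + x ^ 2 ≤ 4 * cosh x := by
    rw [← cosh_abs, cosh_eq]
    nlinarith [quadratic_le_exp_of_nonneg (abs_nonneg x), exp_pos (-|x|), sq_abs x, abs_nonneg x]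
  rw [sech, ← div_eq_mul_inv, le_div_iff₀ (by positivity)]
  calc (cosh x)⁻¹ * (1 + x ^ 2) ≤ (cosh x)⁻¹ * (4 * cosh x) := by gcongr
    _ = 4 := by field_simp [(cosh_pos x).ne']

lemma integrable_sech : Integrable sech :=
  (integrable_inv_one_add_sq.const_mul 4).mono' continuous_sech.aestronglyMeasurable
    (ae_of_all _ fun x => by
      rw [norm_of_nonneg (sech_pos x).le]; exact sech_le_four_mul_inv_one_add_sq x)

lemma integrable_of_abs_le_mul_sech {f : ℝ → ℝ} (hf : Continuous f) {C : ℝ}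
    (h : ∀ x, |f x| ≤ C * sech x) : Integrable f :=
  (integrable_sech.const_mul C).mono' hf.aestronglyMeasurable (ae_of_all _ h)

lemma sech_pow_le_sech {k : ℕ} (hk : k ≠ 0) (x : ℝ) : sech x ^ k ≤ sech x :=
  pow_le_of_le_one (sech_pos x).le (sech_le_one x) hk

lemma integrable_sech_pow_mul_cos {k : ℕ} (hk : k ≠ 0) (α : ℝ) :
    Integrable fun x => sech x ^ k * cos (α * x) := by
  refine integrable_of_abs_le_mul_sech (by fun_prop) (C := 1) fun x => ?_
  rw [abs_mul, abs_of_pos (pow_pos (sech_pos x) k), one_mul]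
  calc sech x ^ k * |cos (α * x)| ≤ sech x ^ k * 1 :=
        mul_le_mul_of_nonneg_left (abs_cos_le_one _) (pow_pos (sech_pos x) k).le
    _ ≤ sech x := by rw [mul_one]; exact sech_pow_le_sech hk x

noncomputable def sechPowCosPrimitive (n : ℕ) (α t : ℝ) : ℝ :=
  sech t ^ (n + 1) * (n * sinh t * cos (α * t) - α * cosh t * sin (α * t))

lemma hasDerivAt_sechPowCosPrimitive (n : ℕ) (α x : ℝ) :
    HasDerivAt (sechPowCosPrimitive n α)
      (n * (n + 1) * (sech x ^ (n + 2) * cos (α * x))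
        - (n ^ 2 + α ^ 2) * (sech x ^ n * cos (α * x))) x := by
  have hcos : HasDerivAt (fun t => cos (α * t)) (-sin (α * x) * α) x := by
    simpa using ((hasDerivAt_id x).const_mul α).cos
  have hsin : HasDerivAt (fun t => sin (α * t)) (cos (α * x) * α) x := by
    simpa using ((hasDerivAt_id x).const_mul α).sin
  refine (((hasDerivAt_sech x).pow (n + 1)).mul
    ((((hasDerivAt_sinh x).const_mul (n : ℝ)).mul hcos).sub
      (((hasDerivAt_cosh x).const_mul α).mul hsin))).congr_deriv ?_
  simp only [Pi.mul_apply, Pi.sub_apply, Pi.pow_apply, Nat.add_sub_cancel, Nat.cast_add,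
    Nat.cast_one, pow_succ]
  linear_combination sech x ^ n * (-(n + 1) * n * sech x ^ 2 * cos (α * x) * sinh_sq x
    + ((n + 1) * α * sinh x * sin (α * x) * sech x
      - (n + 1) * n * cos (α * x) * (sech x * cosh x + 1)
      + n * cos (α * x) - α ^ 2 * cos (α * x)) * sech_mul_cosh x)

lemma abs_sechPowCosPrimitive_le (n : ℕ) (α x : ℝ) :
    |sechPowCosPrimitive n α x| ≤ (n + |α|) * sech x ^ n := by
  have hsinh : |sinh x| ≤ cosh x := by
    rw [abs_sinh, ← cosh_abs]; exact (sinh_lt_cosh _).le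
  have hbracket : |n * sinh x * cos (α * x) - α * cosh x * sin (α * x)| ≤ (n + |α|) * cosh x :=
    calc _ ≤ |n * sinh x * cos (α * x)| + |α * cosh x * sin (α * x)| := abs_sub _ _
      _ = n * |sinh x| * |cos (α * x)| + |α| * cosh x * |sin (α * x)| := by
        rw [abs_mul, abs_mul, abs_mul, abs_mul, Nat.abs_cast, abs_of_pos (cosh_pos x)]
      _ ≤ n * cosh x * 1 + |α| * cosh x * 1 := by
        gcongr
        exacts [abs_cos_le_one _, abs_sin_le_one _]
      _ = (n + |α|) * cosh x := by ring
  calc _ = sech x ^ (n + 1) * |n * sinh x * cos (α * x) - α * cosh x * sin (α * x)| := by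
        rw [sechPowCosPrimitive, abs_mul, abs_of_pos (pow_pos (sech_pos x) _)]
    _ ≤ sech x ^ (n + 1) * ((n + |α|) * cosh x) :=
        mul_le_mul_of_nonneg_left hbracket (pow_pos (sech_pos x) _).le
    _ = (n + |α|) * sech x ^ n := by
        linear_combination (n + |α|) * sech x ^ n * sech_mul_cosh x

lemma integral_sech_pow_add_two_mul_cos {n : ℕ} (hn : n ≠ 0) (α : ℝ) :
    n * (n + 1) * ∫ x, sech x ^ (n + 2) * cos (α * x)
      = (n ^ 2 + α ^ 2) * ∫ x, sech x ^ n * cos (α * x) := by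
  have hF : Integrable (sechPowCosPrimitive n α) :=
    integrable_of_abs_le_mul_sech (by unfold sechPowCosPrimitive; fun_prop) fun x =>
      (abs_sechPowCosPrimitive_le n α x).trans (by gcongr; exact sech_pow_le_sech hn x)
  have hhigh : Integrable fun x => n * (n + 1) * (sech x ^ (n + 2) * cos (α * x)) :=
    (integrable_sech_pow_mul_cos (by omega) α).const_mul _
  have hlow : Integrable fun x => (n ^ 2 + α ^ 2) * (sech x ^ n * cos (α * x)) :=
    (integrable_sech_pow_mul_cos hn α).const_mul _
  have h := integral_eq_zero_of_hasDerivAt_of_integrable (hasDerivAt_sechPowCosPrimitive n α)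
    (hhigh.sub hlow) hF
  rw [integral_sub hhigh hlow, integral_const_mul, integral_const_mul] at h
  linarith

lemma ofReal_cpow_eq_cexp {x : ℝ} (hx : 0 < x) (w : ℂ) :
    (x : ℂ) ^ w = Complex.exp (Real.log x * w) := by
  rw [Complex.cpow_def_of_ne_zero (Complex.ofReal_ne_zero.2 hx.ne'), Complex.ofReal_log hx.le]

lemma sigmoid_mul_one_sub_smul_cpow (s : ℂ) (t : ℝ) :
    |sigmoid t * (1 - sigmoid t)| • ((sigmoid t : ℂ) ^ (s - 1) * (1 - (sigmoid t : ℂ)) ^ (-s))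
      = Complex.exp (s * t) / (1 + Real.exp t) := by
  set σ := sigmoid t
  have hσ : 0 < σ := sigmoid_pos t
  have h1σ : 0 < 1 - σ := sub_pos.2 (sigmoid_lt_one t)
  have hrel : 1 - σ = σ * Real.exp (-t) := by rw [sigmoid_mul_rexp_neg, sigmoid_neg]
  have hlog : Real.log σ = Real.log (1 - σ) + t := by
    rw [hrel, Real.log_mul hσ.ne' (Real.exp_pos _).ne', Real.log_exp]; ring
  have hinv : 1 - σ = (1 + Real.exp t)⁻¹ := by rw [← sigmoid_neg, sigmoid_def, neg_neg]
  rw [abs_of_pos (mul_pos hσ h1σ), Complex.real_smul,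
    show (1 : ℂ) - σ = ((1 - σ : ℝ) : ℂ) by push_cast; rfl, ofReal_cpow_eq_cexp hσ,
    ofReal_cpow_eq_cexp h1σ, hlog, ← Complex.exp_add]
  have hexp : ((Real.log (1 - σ) + t : ℝ) : ℂ) * (s - 1) + (Real.log (1 - σ) : ℂ) * -s
      = s * t + ((-(t + Real.log (1 - σ)) : ℝ) : ℂ) := by push_cast; ring
  have hreal : σ * (1 - σ) * Real.exp (-(t + Real.log (1 - σ))) = (1 + Real.exp t)⁻¹ := by
    rw [← hinv, Real.exp_neg, Real.exp_add, Real.exp_log h1σ]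
    nth_rw 2 [hrel]
    rw [Real.exp_neg]
    field_simp
  rw [hexp, Complex.exp_add, ← Complex.ofReal_exp, div_eq_mul_inv,
    show (1 : ℂ) + Real.exp t = ((1 + Real.exp t : ℝ) : ℂ) by push_cast; rfl,
    ← Complex.ofReal_inv, ← hreal]
  push_cast
  ring

lemma integral_cexp_mul_div_one_add_exp {s : ℂ} (hs0 : 0 < s.re) (hs1 : s.re < 1) :
    ∫ t : ℝ, Complex.exp (s * t) / (1 + Real.exp t) = π / Complex.sin (π * s) := by
  have hbeta : Complex.betaIntegral s (1 - s)
      = ∫ x in Set.range sigmoid, (x : ℂ) ^ (s - 1) * (1 - (x : ℂ)) ^ (-s) := by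
    rw [range_sigmoid, Complex.betaIntegral, intervalIntegral.integral_of_le zero_le_one,
      integral_Ioc_eq_integral_Ioo, sub_sub_cancel_left]
  rw [← Complex.Gamma_mul_Gamma_one_sub,
    Complex.Gamma_mul_Gamma_eq_betaIntegral hs0 (by simpa using hs1), add_sub_cancel,
    Complex.Gamma_one, one_mul, hbeta, ← Set.image_univ,
    integral_image_eq_integral_abs_deriv_smul MeasurableSet.univ
      (fun t _ => (hasDerivAt_sigmoid t).hasDerivWithinAt) sigmoid_injective.injOn,
    setIntegral_univ]
  simp_rw [sigmoid_mul_one_sub_smul_cpow]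

lemma cexp_mul_sech (z : ℂ) (x : ℝ) :
    Complex.exp (z * x) * sech x
      = 2 * (Complex.exp ((z + 1) / 2 * ↑(2 * x)) / (1 + Real.exp (2 * x))) := by
  have hden : (1 : ℂ) + Real.exp (2 * x) ≠ 0 := by
    exact_mod_cast (by positivity : (0 : ℝ) < 1 + Real.exp (2 * x)).ne'
  have hsech : sech x = 2 * Real.exp x / (1 + Real.exp (2 * x)) := by
    rw [sech, cosh_eq, show 2 * x = x + x by ring, Real.exp_add, Real.exp_neg]
    field_simp
    ring
  rw [hsech, show (z + 1) / 2 * ↑(2 * x) = z * x + x by push_cast; ring, Complex.exp_add]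
  push_cast at hden ⊢
  field_simp

lemma integral_cexp_mul_sech {z : ℂ} (hz : |z.re| < 1) :
    ∫ x : ℝ, Complex.exp (z * x) * sech x = π / Complex.cos (π * z / 2) := by
  obtain ⟨hz0, hz1⟩ := abs_lt.1 hz
  simp_rw [cexp_mul_sech]
  rw [integral_const_mul, Measure.integral_comp_mul_left
      (fun t : ℝ => Complex.exp ((z + 1) / 2 * t) / (1 + Real.exp t)) 2,
    integral_cexp_mul_div_one_add_exp (by simp; linarith) (by simp; linarith),
    show (π : ℂ) * ((z + 1) / 2) = π * z / 2 + π / 2 by ring, Complex.sin_add_pi_div_two]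
  norm_num
  ring

lemma integral_sech_mul_cos (α : ℝ) :
    ∫ x : ℝ, sech x * cos (α * x) = π / cosh (π * α / 2) := by
  have hexp (x : ℝ) : (α : ℂ) * Complex.I * x = ((α * x : ℝ) : ℂ) * Complex.I := by
    push_cast; ring
  have hint : Integrable fun x : ℝ => Complex.exp (α * Complex.I * x) * sech x :=
    integrable_sech.mono' (by fun_prop : Continuous _).aestronglyMeasurable (ae_of_all _ fun x => by
      rw [norm_mul, hexp, Complex.norm_exp_ofReal_mul_I, one_mul, Complex.norm_real,
        norm_of_nonneg (sech_pos x).le])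
  have hcos : Complex.cos (π * (α * Complex.I) / 2) = cosh (π * α / 2) := by
    rw [show (π : ℂ) * (α * Complex.I) / 2 = ((π * α / 2 : ℝ) : ℂ) * Complex.I by push_cast; ring,
      Complex.cos_mul_I, Complex.ofReal_cosh]
  calc ∫ x : ℝ, sech x * cos (α * x)
      = ∫ x : ℝ, RCLike.re (Complex.exp (α * Complex.I * x) * sech x) := by
        congr 1 with x
        rw [RCLike.re_to_complex, Complex.re_mul_ofReal, hexp, Complex.exp_ofReal_mul_I_re,
          mul_comm]
    _ = RCLike.re (∫ x : ℝ, Complex.exp (α * Complex.I * x) * sech x) := integral_re hint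
    _ = π / cosh (π * α / 2) := by
        rw [integral_cexp_mul_sech (by simp), hcos, ← Complex.ofReal_div]
        rfl

theorem sech3_cos_integral (α : ℝ) :
    ∫ τ : ℝ, (sech τ) ^ 3 * Real.cos (α * τ)
      = Real.pi * (α ^ 2 + 1) / (2 * Real.cosh (Real.pi * α / 2)) := by
  have h := integral_sech_pow_add_two_mul_cos one_ne_zero α
  norm_num [integral_sech_mul_cos] at h
  have hcosh := (cosh_pos (π * α / 2)).ne'
  rw [eq_div_iff (by positivity), ← mul_assoc, mul_comm _ 2, h]
  field_simp
  ring
end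

section
/- For every real κ, ∫_{-∞}^{∞} sech⁵(ξ) cos(κξ) dξ = π(κ⁴ + 10κ² + 9) / (24 cosh(πκ/2)). -/
/-!
The logistic substitution `u = σ(2ξ)` turns the Fourier integral of `sechⁿ` into a Beta integral:
since `σ(2ξ) σ(-2ξ) = (2 cosh ξ)⁻²` and `σ(2ξ) / σ(-2ξ) = e^{2ξ}`,
`∫ sechⁿ ξ e^{iκξ} dξ = 2ⁿ⁻¹ B(n/2 + iκ/2, n/2 - iκ/2)`.
For `n = 5` the Beta value is `Γ(5/2 + iy) Γ(5/2 - iy) / Γ(5)`, which the recursion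
`Γ(s + 1) = s Γ(s)` and the reflection formula `Γ(1/2 + iy) Γ(1/2 - iy) = π / cosh(πy)` evaluate.
-/

open Real MeasureTheory

open Set

namespace Complex

lemma ofReal_mul_cpow_sub_one {u : ℝ} (hu : u ≠ 0) (s : ℂ) :
    (u : ℂ) * (u : ℂ) ^ (s - 1) = (u : ℂ) ^ s := by
  conv_rhs => rw [← add_sub_cancel 1 s, cpow_add _ _ (by exact_mod_cast hu), cpow_one]

lemma ofReal_exp_div_cpow (t : ℝ) {c : ℝ} (hc : 0 < c) (s : ℂ) :
    ((Real.exp t / c : ℝ) : ℂ) ^ s = exp (t * s) / (c : ℂ) ^ s := by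
  rw [ofReal_div, div_cpow_ofReal_nonneg (Real.exp_pos t).le hc.le,
    cpow_def_of_ne_zero (by exact_mod_cast (Real.exp_pos t).ne'),
    ← ofReal_log (Real.exp_pos t).le, Real.log_exp]

lemma integrableOn_Ioo_betaIntegrand {a b : ℂ} (ha : 0 < a.re) (hb : 0 < b.re) :
    IntegrableOn (fun u : ℝ => (u : ℂ) ^ (a - 1) * (1 - (u : ℂ)) ^ (b - 1)) (Ioo 0 1) :=
  (intervalIntegrable_iff_integrableOn_Ioo_of_le zero_le_one).mp (betaIntegral_convergent ha hb)

lemma Gamma_add_two {s : ℂ} (h0 : s ≠ 0) (h1 : s + 1 ≠ 0) :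
    Gamma (s + 2) = (s + 1) * s * Gamma s := by
  rw [show s + 2 = s + 1 + 1 by ring, Gamma_add_one _ h1, Gamma_add_one _ h0, mul_assoc]

lemma Gamma_half_add_mul_I_mul_Gamma_half_sub_mul_I (y : ℝ) :
    Gamma (1 / 2 + y * I) * Gamma (1 / 2 - y * I) = π / cosh (π * y) := by
  have h := Gamma_mul_Gamma_one_sub (1 / 2 + y * I)
  rw [show 1 - (1 / 2 + y * I) = 1 / 2 - y * I by ring,
    show (π : ℂ) * (1 / 2 + y * I) = π / 2 + (π * y : ℂ) * I by ring,
    sin_add_mul_I, sin_pi_div_two, cos_pi_div_two] at h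
  simpa using h

lemma betaIntegral_five_halves_add_mul_I (y : ℝ) :
    betaIntegral (5 / 2 + y * I) (5 / 2 - y * I)
      = ((π * (y ^ 2 + 1 / 4) * (y ^ 2 + 9 / 4) / (24 * Real.cosh (π * y)) : ℝ) : ℂ) := by
  have hne : ∀ s : ℂ, s.re = 1 / 2 → s ≠ 0 ∧ s + 1 ≠ 0 := by
    intro s hs
    constructor <;> intro h <;> have := congrArg re h <;> norm_num [hs] at this
  obtain ⟨h0, h1⟩ := hne (1 / 2 + y * I) (by simp)
  obtain ⟨h0', h1'⟩ := hne (1 / 2 - y * I) (by simp)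
  have hΓ5 : Gamma (5 / 2 + y * I + (5 / 2 - y * I)) = 24 := by
    rw [show 5 / 2 + y * I + (5 / 2 - y * I) = (4 : ℕ) + 1 by push_cast; ring,
      Gamma_nat_eq_factorial]
    norm_num [Nat.factorial]
  have hpoly : (1 / 2 + y * I + 1) * (1 / 2 + y * I) * ((1 / 2 - y * I + 1) * (1 / 2 - y * I))
      = ((y ^ 2 + 1 / 4) * (y ^ 2 + 9 / 4) : ℂ) := by
    linear_combination (-(5 / 2) * (y : ℂ) ^ 2 + (y : ℂ) ^ 4 * (I ^ 2 - 1)) * I_sq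
  rw [betaIntegral_eq_Gamma_mul_div _ _ (by simp) (by simp), hΓ5,
    show 5 / 2 + y * I = 1 / 2 + y * I + 2 by ring, show 5 / 2 - y * I = 1 / 2 - y * I + 2 by ring,
    Gamma_add_two h0 h1, Gamma_add_two h0' h1', mul_mul_mul_comm,
    Gamma_half_add_mul_I_mul_Gamma_half_sub_mul_I, hpoly]
  push_cast
  ring

end Complex

namespace Real

lemma image_univ_sigmoid : sigmoid '' univ = Ioo 0 1 := by rw [image_univ, range_sigmoid]

lemma abs_deriv_sigmoid_smul_betaIntegrand (a b : ℂ) (x : ℝ) :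
    |sigmoid x * (1 - sigmoid x)| •
        ((sigmoid x : ℂ) ^ (a - 1) * (1 - (sigmoid x : ℂ)) ^ (b - 1))
      = (sigmoid x : ℂ) ^ a * (sigmoid (-x) : ℂ) ^ b := by
  have h1 : 1 - (sigmoid x : ℂ) = (sigmoid (-x) : ℂ) := by rw [sigmoid_neg]; push_cast; rfl
  rw [← sigmoid_neg, h1, abs_of_pos (mul_pos (sigmoid_pos x) (sigmoid_pos (-x))),
    Complex.real_smul, Complex.ofReal_mul,
    ← Complex.ofReal_mul_cpow_sub_one (sigmoid_pos x).ne' a,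
    ← Complex.ofReal_mul_cpow_sub_one (sigmoid_pos (-x)).ne' b]
  ring

lemma integrable_sigmoid_cpow_mul_sigmoid_neg_cpow {a b : ℂ} (ha : 0 < a.re) (hb : 0 < b.re) :
    Integrable (fun x : ℝ => (sigmoid x : ℂ) ^ a * (sigmoid (-x) : ℂ) ^ b) := by
  have h := (integrableOn_image_iff_integrableOn_abs_deriv_smul MeasurableSet.univ
    (fun x _ => (hasDerivAt_sigmoid x).hasDerivWithinAt) sigmoid_injective.injOn _).mp
    (image_univ_sigmoid ▸ Complex.integrableOn_Ioo_betaIntegrand ha hb)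
  simpa only [abs_deriv_sigmoid_smul_betaIntegrand, integrableOn_univ] using h

lemma integral_sigmoid_cpow_mul_sigmoid_neg_cpow (a b : ℂ) :
    ∫ x : ℝ, (sigmoid x : ℂ) ^ a * (sigmoid (-x) : ℂ) ^ b = Complex.betaIntegral a b := by
  rw [Complex.betaIntegral, intervalIntegral.integral_of_le zero_le_one,
    integral_Ioc_eq_integral_Ioo, ← image_univ_sigmoid,
    integral_image_eq_integral_abs_deriv_smul MeasurableSet.univ
      (fun x _ => (hasDerivAt_sigmoid x).hasDerivWithinAt) sigmoid_injective.injOn,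
    setIntegral_univ]
  simp only [abs_deriv_sigmoid_smul_betaIntegrand]

lemma sigmoid_two_mul (x : ℝ) : sigmoid (2 * x) = exp x / (2 * cosh x) := by
  rw [sigmoid_def, cosh_eq, exp_neg, exp_neg, show 2 * x = x + x by ring, exp_add]
  field_simp

lemma sigmoid_two_mul_cpow_mul_sigmoid_neg_two_mul_cpow (a b : ℂ) (x : ℝ) :
    (sigmoid (2 * x) : ℂ) ^ a * (sigmoid (-(2 * x)) : ℂ) ^ b
      = Complex.exp ((a - b) * x) / ((2 * cosh x : ℝ) : ℂ) ^ (a + b) := by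
  have hc : 0 < 2 * cosh x := by positivity
  rw [← mul_neg, sigmoid_two_mul, sigmoid_two_mul, cosh_neg,
    Complex.ofReal_exp_div_cpow _ hc, Complex.ofReal_exp_div_cpow _ hc,
    Complex.cpow_add _ _ (by exact_mod_cast hc.ne'), div_mul_div_comm, ← Complex.exp_add]
  push_cast
  ring_nf

lemma integrable_cexp_mul_div_two_mul_cosh_cpow {a b : ℂ} (ha : 0 < a.re) (hb : 0 < b.re) :
    Integrable (fun x : ℝ => Complex.exp ((a - b) * x) / ((2 * cosh x : ℝ) : ℂ) ^ (a + b)) := by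
  simp_rw [← sigmoid_two_mul_cpow_mul_sigmoid_neg_two_mul_cpow]
  exact (integrable_sigmoid_cpow_mul_sigmoid_neg_cpow ha hb).comp_mul_left' two_ne_zero

lemma integral_cexp_mul_div_two_mul_cosh_cpow (a b : ℂ) :
    ∫ x : ℝ, Complex.exp ((a - b) * x) / ((2 * cosh x : ℝ) : ℂ) ^ (a + b)
      = Complex.betaIntegral a b / 2 := by
  simp_rw [← sigmoid_two_mul_cpow_mul_sigmoid_neg_two_mul_cpow]
  rw [Measure.integral_comp_mul_left (fun y => (sigmoid y : ℂ) ^ a * (sigmoid (-y) : ℂ) ^ b),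
    integral_sigmoid_cpow_mul_sigmoid_neg_cpow, abs_of_pos (by norm_num), Complex.real_smul]
  push_cast
  ring

end Real

section Sech

open Complex

/- The exponents are left as `a - b` and `a + b` with `a, b = n/2 ± iκ/2`, so that the right side
is the integrand of `Real.integral_cexp_mul_div_two_mul_cosh_cpow`. -/
lemma sech_pow_mul_cexp_eq (n : ℕ) (κ x : ℝ) :
    (sech x : ℂ) ^ n * exp (κ * x * I)
      = 2 ^ n * (exp (((n / 2 + κ / 2 * I) - (n / 2 - κ / 2 * I)) * x)
        / ((2 * Real.cosh x : ℝ) : ℂ) ^ ((n / 2 + κ / 2 * I) + (n / 2 - κ / 2 * I))) := by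
  have hcosh : Complex.cosh x ≠ 0 := by exact_mod_cast (Real.cosh_pos x).ne'
  rw [show (n / 2 + κ / 2 * I) + (n / 2 - κ / 2 * I) = ((n : ℕ) : ℂ) by ring,
    show (n / 2 + κ / 2 * I) - (n / 2 - κ / 2 * I) = (κ : ℂ) * I by ring, cpow_natCast, sech]
  push_cast
  rw [inv_pow, mul_pow]
  field_simp

lemma integral_sech_pow_mul_cexp (n : ℕ) (κ : ℝ) :
    ∫ x : ℝ, (sech x : ℂ) ^ n * exp (κ * x * I)
      = 2 ^ n / 2 * betaIntegral (n / 2 + κ / 2 * I) (n / 2 - κ / 2 * I) := by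
  simp_rw [sech_pow_mul_cexp_eq, integral_const_mul, Real.integral_cexp_mul_div_two_mul_cosh_cpow]
  ring

lemma integrable_sech_pow_mul_cexp {n : ℕ} (hn : 0 < n) (κ : ℝ) :
    Integrable (fun x : ℝ => (sech x : ℂ) ^ n * exp (κ * x * I)) := by
  simp_rw [sech_pow_mul_cexp_eq]
  exact (Real.integrable_cexp_mul_div_two_mul_cosh_cpow (by simpa) (by simpa)).const_mul _

lemma integral_sech_pow_mul_cos {n : ℕ} (hn : 0 < n) (κ : ℝ) :
    ∫ x : ℝ, sech x ^ n * Real.cos (κ * x)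
      = (2 ^ n / 2 * betaIntegral (n / 2 + κ / 2 * I) (n / 2 - κ / 2 * I)).re := by
  rw [← integral_sech_pow_mul_cexp, ← RCLike.re_to_complex,
    ← integral_re (integrable_sech_pow_mul_cexp hn κ)]
  congr with x
  rw [← ofReal_pow, ← ofReal_mul, RCLike.re_to_complex, re_ofReal_mul, exp_ofReal_mul_I_re]

end Sech

theorem sech5_cos_integral (κ : ℝ) :
    ∫ ξ : ℝ, (sech ξ) ^ 5 * Real.cos (κ * ξ)
      = Real.pi * (κ ^ 4 + 10 * κ ^ 2 + 9) / (24 * Real.cosh (Real.pi * κ / 2)) := by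
  have hβ := Complex.betaIntegral_five_halves_add_mul_I (κ / 2)
  rw [Complex.ofReal_div κ 2, Complex.ofReal_ofNat] at hβ
  rw [integral_sech_pow_mul_cos (by norm_num : 0 < 5) κ, Nat.cast_ofNat, hβ,
    show (2 : ℂ) ^ 5 / 2 = ((16 : ℝ) : ℂ) by norm_num, ← Complex.ofReal_mul, Complex.ofReal_re,
    ← mul_div_assoc]
  field_simp
  ring
end
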